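/- Main existence theorem for conditional Chisini means: Suppose T : L^∞(Ω,F) → ℝ satisfies T(0) = 0, (G-Mo), (G-QL) and (G-PC) for a sub-σ-algebra G ⊆ F. Then for any bounded F-measurable f at which T satisfies (G-PS) and (G-NB), there exists a bounded G-measurable ĝ with T(f·1_A) = T(ĝ·1_A) for all A ∈ G, and ĝ is unique up to modification on a set in N_G. -/

import Mathlib

open Filter Topology MeasureTheory

/-- Bounded measurable real-valued functions w.r.t. a σ-algebra `mG`. -/
def BddMeas {Ω : Type*} (mG : MeasurableSpace Ω) (f : Ω → ℝ) : Prop :=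
  Measurable[mG] f ∧ ∃ C : ℝ, ∀ ω, |f ω| ≤ C

/-- The class of irrelevant (null) events in `mG` for the functional `T`. -/
def NullG {Ω : Type*} (mG : MeasurableSpace Ω) (T : (Ω → ℝ) → ℝ) : Set (Set Ω) :=
  {N | MeasurableSet[mG] N ∧ ∀ g₁ g₂ : Ω → ℝ, BddMeas mG g₁ → BddMeas mG g₂ →
    T (g₁ + N.indicator g₂) = T g₁}

/-- (G-Mo): `T` is `G`-monotone. -/
def GMo {Ω : Type*} (mG : MeasurableSpace Ω) (T : (Ω → ℝ) → ℝ) : Prop :=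
  ∀ x y : ℝ, x < y → ∀ g : Ω → ℝ, BddMeas mG g → ∀ A : Set Ω,
    MeasurableSet[mG] A → A ∉ NullG mG T →
    T (A.indicator (fun _ => x) + Aᶜ.indicator g) <
      T (A.indicator (fun _ => y) + Aᶜ.indicator g)

/-- (G-QL): `T` is `G`-quasilinear. -/
def GQL {Ω : Type*} (mG : MeasurableSpace Ω) (T : (Ω → ℝ) → ℝ) : Prop :=
  ∀ g₁ g₂ : Ω → ℝ, BddMeas mG g₁ → BddMeas mG g₂ → ∀ A : Set Ω, MeasurableSet[mG] A →
    (∃ gb : Ω → ℝ, BddMeas mG gb ∧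
      T (A.indicator g₁ + Aᶜ.indicator gb) ≤ T (A.indicator g₂ + Aᶜ.indicator gb)) →
    ∀ g : Ω → ℝ, BddMeas mG g →
      T (A.indicator g₁ + Aᶜ.indicator g) ≤ T (A.indicator g₂ + Aᶜ.indicator g)

/-- (G-PC): `T` is `G`-pointwise continuous. -/
def GPC {Ω : Type*} (mG : MeasurableSpace Ω) (T : (Ω → ℝ) → ℝ) : Prop :=
  ∀ (gn : ℕ → Ω → ℝ) (g : Ω → ℝ), (∀ n, BddMeas mG (gn n)) → BddMeas mG g →
    (∃ C : ℝ, ∀ n ω, |gn n ω| ≤ C) →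
    (∀ ω, Tendsto (fun n => gn n ω) atTop (𝓝 (g ω))) →
    Tendsto (fun n => T (gn n)) atTop (𝓝 (T g))

/-- The sup norm of a bounded function. -/
noncomputable def supNorm {Ω : Type*} (f : Ω → ℝ) : ℝ := ⨆ ω, |f ω|

/-- (G-PS): `T` is `G`-pasting at `f`. -/
def GPS {Ω : Type*} (mG : MeasurableSpace Ω) (T : (Ω → ℝ) → ℝ) (f : Ω → ℝ) : Prop :=
  ∀ A₁ A₂ : Set Ω, MeasurableSet[mG] A₁ → MeasurableSet[mG] A₂ → Disjoint A₁ A₂ →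
    ∀ x₁ x₂ : ℝ, T (A₁.indicator f) = T (A₁.indicator fun _ => x₁) →
      T (A₂.indicator f) = T (A₂.indicator fun _ => x₂) →
      T (A₁.indicator f + A₂.indicator f) =
        T (A₁.indicator (fun _ => x₁) + A₂.indicator fun _ => x₂)

/-- (G-NB): `T` is `G`-norm bounded at `f`. -/
def GNB {Ω : Type*} (mG : MeasurableSpace Ω) (T : (Ω → ℝ) → ℝ) (f : Ω → ℝ) : Prop :=
  ∀ A : Set Ω, MeasurableSet[mG] A →
    T (A.indicator fun _ => -(supNorm f)) ≤ T (A.indicator f) ∧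
    T (A.indicator f) ≤ T (A.indicator fun _ => supNorm f)


/-!
(G-Mo) and (G-PC) make `T` monotone on bounded `G`-measurable functions and turn the `T`-null
sets into a σ-ideal; uniqueness follows since `T` detects a uniform gap between two functions on a
non-null set.

For existence, call `A` sub-level for `x` when `T(f·1_B) ≤ T(x·1_B)` for every `G`-set `B ⊆ A`.
By pasting (G-PS), sub-level sets for `x` are closed under countable unions, and an exhaustion with
the gauge `A ↦ T(1_A)` produces a maximal one, `C_x`, off which `T` sees `f ≥ x`. The sets
`D_q = ⋃_{p ≤ q} C_p` (`q ∈ ℚ`) are the level sets of `ĝ ω = inf {q | ω ∈ D_q}`. Cut `A` into the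
bands of a grid, on each of which `T` sees `f` between consecutive levels; each band carries a
constant `c` with `T(c·1_band) = T(f·1_band)`, and pasting these (G-PS with (G-QL)) shows that
`T(f·1_A)` equals `T` of a step function uniformly close to `ĝ·1_A`. Then (G-PC) gives
`T(f·1_A) = T(ĝ·1_A)`.
-/

section

variable {Ω : Type*} {mG : MeasurableSpace Ω} {T : (Ω → ℝ) → ℝ} {f : Ω → ℝ}

namespace BddMeas

lemma const (c : ℝ) : BddMeas mG (fun _ : Ω => c) :=
  ⟨measurable_const, |c|, fun _ => le_rfl⟩

lemma zero : BddMeas mG (0 : Ω → ℝ) := const 0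

lemma add {g₁ g₂ : Ω → ℝ} (h₁ : BddMeas mG g₁) (h₂ : BddMeas mG g₂) :
    BddMeas mG (g₁ + g₂) := by
  obtain ⟨m₁, C₁, hC₁⟩ := h₁
  obtain ⟨m₂, C₂, hC₂⟩ := h₂
  exact ⟨m₁.add m₂, C₁ + C₂, fun ω => (abs_add_le _ _).trans (add_le_add (hC₁ ω) (hC₂ ω))⟩

lemma indicator {g : Ω → ℝ} (hg : BddMeas mG g) {A : Set Ω} (hA : MeasurableSet[mG] A) :
    BddMeas mG (A.indicator g) := by
  obtain ⟨m, C, hC⟩ := hg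
  exact ⟨m.indicator hA, C, fun ω => (norm_indicator_le_norm_self g ω).trans (hC ω)⟩

lemma indicator_const (c : ℝ) {A : Set Ω} (hA : MeasurableSet[mG] A) :
    BddMeas mG (A.indicator fun _ => c) :=
  (const c).indicator hA

lemma finset_sum {ι : Type*} (s : Finset ι) {g : ι → Ω → ℝ}
    (hg : ∀ i ∈ s, BddMeas mG (g i)) : BddMeas mG (∑ i ∈ s, g i) := by
  classical
  induction s using Finset.induction_on with
  | empty => simpa using zero
  | insert a s ha ih =>
    rw [Finset.sum_insert ha]
    exact (hg a (s.mem_insert_self a)).add (ih fun i hi => hg i (Finset.mem_insert_of_mem hi))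

end BddMeas

lemma indicator_union_eq_add {M : Type*} [AddZeroClass M] {A₁ A₂ : Set Ω} (h : Disjoint A₁ A₂)
    (g : Ω → M) :
    (A₁ ∪ A₂).indicator g = A₁.indicator g + A₂.indicator g :=
  Set.indicator_union_of_disjoint h g

lemma eventually_indicator_eq_iUnion {β : Type*} [Zero β] {V : ℕ → Set Ω} (hV : Monotone V)
    (g : Ω → β) (ω : Ω) : ∀ᶠ n in atTop, (V n).indicator g ω = (⋃ k, V k).indicator g ω := by
  by_cases h : ω ∈ ⋃ k, V k
  · obtain ⟨k, hk⟩ := Set.mem_iUnion.1 h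
    exact eventually_atTop.2 ⟨k, fun n hn => by
      rw [Set.indicator_of_mem (hV hn hk), Set.indicator_of_mem h]⟩
  · refine Eventually.of_forall fun n => ?_
    rw [Set.indicator_of_notMem h, Set.indicator_of_notMem fun hn => h (Set.mem_iUnion.2 ⟨n, hn⟩)]

lemma supNorm_nonneg (f : Ω → ℝ) : 0 ≤ supNorm f :=
  Real.iSup_nonneg fun _ => abs_nonneg _

/-! ### Null sets -/

lemma empty_mem_nullG : (∅ : Set Ω) ∈ NullG mG T :=
  ⟨MeasurableSet.empty, fun g₁ _ _ _ => by rw [Set.indicator_empty, ← Pi.zero_def, add_zero]⟩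

lemma nullG_mono {N M : Set Ω} (hN : N ∈ NullG mG T) (hM : MeasurableSet[mG] M) (hMN : M ⊆ N) :
    M ∈ NullG mG T := by
  refine ⟨hM, fun g₁ g₂ hg₁ hg₂ => ?_⟩
  rw [← Set.inter_eq_right.2 hMN, ← Set.indicator_indicator]
  exact hN.2 g₁ _ hg₁ (hg₂.indicator hM)

lemma union_mem_nullG {N₁ N₂ : Set Ω} (h₁ : N₁ ∈ NullG mG T) (h₂ : N₂ ∈ NullG mG T) :
    N₁ ∪ N₂ ∈ NullG mG T := by
  refine ⟨h₁.1.union h₂.1, fun g₁ g₂ hg₁ hg₂ => ?_⟩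
  have hd : N₂ \ N₁ ∈ NullG mG T := nullG_mono h₂ (h₂.1.diff h₁.1) Set.sdiff_subset
  rw [← Set.union_sdiff_self, indicator_union_eq_add Set.disjoint_sdiff_right, ← add_assoc,
    hd.2 _ g₂ (hg₁.add (hg₂.indicator h₁.1)) hg₂, h₁.2 g₁ g₂ hg₁ hg₂]

lemma apply_indicator_of_mem_nullG {N : Set Ω} (hN : N ∈ NullG mG T) {g : Ω → ℝ}
    (hg : BddMeas mG g) : T (N.indicator g) = T 0 := by
  simpa using hN.2 0 g BddMeas.zero hg

lemma GNB.apply_indicator_of_mem_nullG (hNB : GNB mG T f) {N : Set Ω} (hN : N ∈ NullG mG T) :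
    T (N.indicator f) = T 0 := by
  have h₁ := _root_.apply_indicator_of_mem_nullG hN (BddMeas.const (supNorm f))
  have h₂ := _root_.apply_indicator_of_mem_nullG hN (BddMeas.const (-supNorm f))
  have := hNB N hN.1
  exact le_antisymm (h₁ ▸ this.2) (h₂ ▸ this.1)

/-! ### Monotonicity and continuity -/

lemma GMo.apply_indicator_const_add_compl_le (hMo : GMo mG T) {A : Set Ω}
    (hA : MeasurableSet[mG] A) {g : Ω → ℝ} (hg : BddMeas mG g) {x y : ℝ} (hxy : x ≤ y) :
    T (A.indicator (fun _ => x) + Aᶜ.indicator g) ≤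
      T (A.indicator (fun _ => y) + Aᶜ.indicator g) := by
  rcases hxy.lt_or_eq with hlt | rfl
  · by_cases hN : A ∈ NullG mG T
    · have hc := hg.indicator hA.compl
      rw [add_comm, hN.2 _ _ hc (BddMeas.const x), add_comm, hN.2 _ _ hc (BddMeas.const y)]
    · exact (hMo x y hlt g hg A hA hN).le
  · exact le_rfl

/-- `min b (max a j)` moves from `a` to `b` as `j` runs from `lo` to `hi`, and each unit step of
`j` raises it by one on a single `G`-set and nowhere else. -/
lemma GMo.apply_comp_int_le (hMo : GMo mG T) {e : ℤ → ℝ} (he : Monotone e) {a b : Ω → ℤ}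
    (ha : Measurable[mG] a) (hb : Measurable[mG] b) (hab : a ≤ b) {lo hi : ℤ}
    (hlo : ∀ ω, lo ≤ a ω) (hhi : ∀ ω, b ω ≤ hi) :
    T (e ∘ a) ≤ T (e ∘ b) := by
  set w : ℤ → Ω → ℤ := fun j ω => min (b ω) (max (a ω) j)
  have hw_mem : ∀ j ω, lo ≤ w j ω ∧ w j ω ≤ hi := fun j ω => by
    have : a ω ≤ b ω := hab ω
    have := hlo ω; have := hhi ω; simp only [w]; omega
  have hbdd : ∀ j, BddMeas mG (e ∘ w j) := fun j =>
    ⟨(measurable_of_countable e).comp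
      ((measurable_of_countable fun p : ℤ × ℤ => min p.2 (max p.1 j)).comp (ha.prodMk hb)),
      max |e lo| |e hi|, fun ω => abs_le_max_abs_abs (he (hw_mem j ω).1) (he (hw_mem j ω).2)⟩
  have hstep : ∀ j, T (e ∘ w j) ≤ T (e ∘ w (j + 1)) := fun j => by
    set A : Set Ω := {ω | a ω ≤ j ∧ j + 1 ≤ b ω}
    have hA : MeasurableSet[mG] A := (ha measurableSet_Iic).inter (hb measurableSet_Ici)
    have hsplit : ∀ k, k = j ∨ k = j + 1 →
        e ∘ w k = A.indicator (fun _ => e k) + Aᶜ.indicator (e ∘ w j) := by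
      intro k hk
      rw [← Set.indicator_self_add_compl A (e ∘ w k)]
      congr 1
      · refine Set.indicator_congr fun ω ⟨h₁, h₂⟩ => ?_
        show e (min (b ω) (max (a ω) k)) = e k
        congr 1
        omega
      · refine Set.indicator_congr fun ω hω => ?_
        show e (min (b ω) (max (a ω) k)) = e (min (b ω) (max (a ω) j))
        have : ¬ (a ω ≤ j ∧ j + 1 ≤ b ω) := hω
        congr 1
        omega
    rw [hsplit j (.inl rfl), hsplit (j + 1) (.inr rfl)]
    exact hMo.apply_indicator_const_add_compl_le hA (hbdd j) (he (Int.le_add_one le_rfl))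
  have hwa : w lo = a := funext fun ω => by
    have : a ω ≤ b ω := hab ω
    have := hlo ω; show min (b ω) (max (a ω) lo) = a ω; omega
  have hwb : w (max lo hi) = b := funext fun ω => by
    have := hhi ω; show min (b ω) (max (a ω) (max lo hi)) = b ω; omega
  rw [← hwa, ← hwb]
  exact monotone_int_of_le_succ hstep (le_max_left lo hi)

lemma ceil_mul_div_mem {m : ℝ} (hm : 0 < m) (x : ℝ) :
    x ≤ (⌈m * x⌉ : ℝ) / m ∧ (⌈m * x⌉ : ℝ) / m ≤ x + 1 / m := by
  constructor
  · rw [le_div_iff₀ hm, mul_comm]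
    exact Int.le_ceil _
  · rw [div_le_iff₀ hm, add_mul, one_div_mul_cancel hm.ne', mul_comm]
    exact (Int.ceil_lt_add_one _).le

lemma GPC.tendsto_ceil_approx (hPC : GPC mG T) {g : Ω → ℝ} (hg : BddMeas mG g) :
    Tendsto (fun n : ℕ => T fun ω => (⌈(n + 1 : ℝ) * g ω⌉ : ℝ) / (n + 1)) atTop (𝓝 (T g)) := by
  obtain ⟨C, hC⟩ := hg.2
  have hm : ∀ n : ℕ, (0 : ℝ) < n + 1 := fun n => n.cast_add_one_pos
  have hbdd : ∀ (n : ℕ) ω, |(⌈(n + 1 : ℝ) * g ω⌉ : ℝ) / (n + 1)| ≤ C + 1 := fun n ω => by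
    obtain ⟨h, h'⟩ := ceil_mul_div_mem (hm n) (g ω)
    have : 1 / ((n : ℝ) + 1) ≤ 1 := by rw [div_le_one (hm n)]; linarith [n.cast_nonneg (α := ℝ)]
    have := abs_le.1 (hC ω)
    exact abs_le.2 ⟨by linarith, by linarith⟩
  refine hPC _ _ (fun n => ⟨(measurable_of_countable fun z : ℤ => (z : ℝ) / (n + 1)).comp
    (hg.1.const_mul _).ceil, C + 1, hbdd n⟩) hg ⟨C + 1, hbdd⟩ fun ω => ?_
  refine tendsto_of_tendsto_of_tendsto_of_le_of_le tendsto_const_nhds ?_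
    (fun n => (ceil_mul_div_mem (hm n) _).1) (fun n => (ceil_mul_div_mem (hm n) _).2)
  simpa using tendsto_const_nhds.add (tendsto_one_div_add_atTop_nhds_zero_nat (𝕜 := ℝ))

lemma GMo.mono (hMo : GMo mG T) (hPC : GPC mG T) {g₁ g₂ : Ω → ℝ} (h₁ : BddMeas mG g₁)
    (h₂ : BddMeas mG g₂) (hle : g₁ ≤ g₂) : T g₁ ≤ T g₂ := by
  obtain ⟨C₁, hC₁⟩ := h₁.2
  obtain ⟨C₂, hC₂⟩ := h₂.2
  refine le_of_tendsto_of_tendsto' (hPC.tendsto_ceil_approx h₁) (hPC.tendsto_ceil_approx h₂)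
    fun n => ?_
  have hm : (0 : ℝ) < n + 1 := n.cast_add_one_pos
  refine hMo.apply_comp_int_le (e := fun z : ℤ => (z : ℝ) / (n + 1))
    (fun i j hij => div_le_div_of_nonneg_right (Int.cast_le.2 hij) hm.le)
    (h₁.1.const_mul _).ceil (h₂.1.const_mul _).ceil
    (fun ω => Int.ceil_mono (mul_le_mul_of_nonneg_left (hle ω) hm.le))
    (lo := ⌈-((n + 1) * C₁)⌉) (hi := ⌈(n + 1) * C₂⌉) (fun ω => Int.ceil_mono ?_)
    (fun ω => Int.ceil_mono ?_)
  · nlinarith [(abs_le.1 (hC₁ ω)).1]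
  · nlinarith [(abs_le.1 (hC₂ ω)).2]

lemma GMo.monotone_apply_indicator_const (hMo : GMo mG T) {A : Set Ω}
    (hA : MeasurableSet[mG] A) : Monotone fun x : ℝ => T (A.indicator fun _ => x) :=
  fun x y hxy => by simpa using hMo.apply_indicator_const_add_compl_le hA BddMeas.zero hxy

lemma GMo.strictMono_apply_indicator_const (hMo : GMo mG T) {A : Set Ω}
    (hA : MeasurableSet[mG] A) (hAn : A ∉ NullG mG T) :
    StrictMono fun x : ℝ => T (A.indicator fun _ => x) :=
  fun x y hxy => by simpa using hMo x y hxy 0 BddMeas.zero A hA hAn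

lemma GPC.tendsto_add_indicator (hPC : GPC mG T) {V : ℕ → Set Ω} (hV : Monotone V)
    (hVm : ∀ n, MeasurableSet[mG] (V n)) {g h : Ω → ℝ} (hg : BddMeas mG g)
    (hh : BddMeas mG h) :
    Tendsto (fun n => T (h + (V n).indicator g)) atTop (𝓝 (T (h + (⋃ n, V n).indicator g))) := by
  obtain ⟨C, hC⟩ := hg.2
  obtain ⟨D, hD⟩ := hh.2
  refine hPC _ _ (fun n => hh.add (hg.indicator (hVm n)))
    (hh.add (hg.indicator (.iUnion hVm))) ⟨D + C, fun n ω => ?_⟩ fun ω => ?_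
  · exact (abs_add_le _ _).trans (add_le_add (hD ω)
      ((norm_indicator_le_norm_self g ω).trans (hC ω)))
  · refine tendsto_const_nhds.congr' ?_
    filter_upwards [eventually_indicator_eq_iUnion hV g ω] with n hn
    simp only [Pi.add_apply, hn]

lemma GPC.tendsto_indicator_const_add_diff (hPC : GPC mG T) {V : ℕ → Set Ω} (hV : Monotone V)
    (hVm : ∀ n, MeasurableSet[mG] (V n)) (x y : ℝ) :
    Tendsto (fun n => T ((V n).indicator (fun _ => x) + ((⋃ k, V k) \ V n).indicator fun _ => y))
      atTop (𝓝 (T ((⋃ k, V k).indicator fun _ => x))) := by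
  have hW := MeasurableSet.iUnion hVm
  refine hPC _ _ (fun n => (BddMeas.indicator_const x (hVm n)).add
    (BddMeas.indicator_const y (hW.diff (hVm n)))) (BddMeas.indicator_const x hW)
    ⟨|x| + |y|, fun n ω => ?_⟩ fun ω => ?_
  · exact (abs_add_le _ _).trans (add_le_add (norm_indicator_le_norm_self (fun _ => x) ω)
      (norm_indicator_le_norm_self (fun _ => y) ω))
  · refine tendsto_const_nhds.congr' ?_
    filter_upwards [eventually_indicator_eq_iUnion hV (fun _ => x) ω,
      eventually_indicator_eq_iUnion hV (fun _ => y) ω] with n hx hy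
    rw [Pi.add_apply, hx, Set.indicator_sdiff (Set.subset_iUnion V n), Pi.sub_apply, hy,
      sub_self, add_zero]

lemma iUnion_mem_nullG (hPC : GPC mG T) {ι : Type*} [Countable ι] {N : ι → Set Ω}
    (h : ∀ i, N i ∈ NullG mG T) : (⋃ i, N i) ∈ NullG mG T := by
  cases isEmpty_or_nonempty ι
  · simpa using empty_mem_nullG
  obtain ⟨e, he⟩ := exists_surjective_nat ι
  rw [← he.iUnion_comp N, ← Set.iUnion_accumulate]
  have hV : ∀ n, Set.accumulate (N ∘ e) n ∈ NullG mG T := by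
    intro n
    induction n with
    | zero => simpa [Set.accumulate] using h (e 0)
    | succ n ih => rw [Set.accumulate_succ]; exact union_mem_nullG ih (h (e (n + 1)))
  refine ⟨.iUnion fun n => (hV n).1, fun g₁ g₂ hg₁ hg₂ => ?_⟩
  refine tendsto_nhds_unique (hPC.tendsto_add_indicator Set.monotone_accumulate
    (fun n => (hV n).1) hg₂ hg₁) ?_
  simp only [(hV _).2 g₁ g₂ hg₁ hg₂]
  exact tendsto_const_nhds

/-! ### Uniqueness -/

/-- Slice `B` into the level sets of `⌊g₁ / ε⌋` with `ε = δ / 2`: one slice is non-null, and on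
it `g₁` and `g₂` are separated by two distinct constants. -/
lemma GMo.apply_indicator_lt_of_add_le (hMo : GMo mG T) (hPC : GPC mG T) {B : Set Ω}
    (hB : MeasurableSet[mG] B) (hBn : B ∉ NullG mG T) {g₁ g₂ : Ω → ℝ} (h₁ : BddMeas mG g₁)
    (h₂ : BddMeas mG g₂) {δ : ℝ} (hδ : 0 < δ) (hgap : ∀ ω ∈ B, g₁ ω + δ ≤ g₂ ω) :
    T (B.indicator g₁) < T (B.indicator g₂) := by
  set ε := δ / 2
  have hε : 0 < ε := half_pos hδ
  have hεδ : ε + ε = δ := add_halves δ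
  set S : ℤ → Set Ω := fun i => B ∩ (fun ω => ⌊g₁ ω / ε⌋) ⁻¹' {i}
  have hSm : ∀ i, MeasurableSet[mG] (S i) := fun i =>
    hB.inter ((h₁.1.div_const ε).floor (measurableSet_singleton i))
  obtain ⟨i, hi⟩ : ∃ i, S i ∉ NullG mG T := by
    by_contra! hall
    refine hBn (nullG_mono (iUnion_mem_nullG hPC hall) hB fun ω hω => ?_)
    exact Set.mem_iUnion.2 ⟨_, hω, rfl⟩
  have hS : ∀ ω ∈ S i, g₁ ω ≤ (i + 1) * ε ∧ (i + 2) * ε ≤ g₂ ω := by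
    rintro ω ⟨hωB, hωi⟩
    have h₁ := Int.floor_le (g₁ ω / ε)
    have h₂ := Int.lt_floor_add_one (g₁ ω / ε)
    simp only [Set.mem_preimage, Set.mem_singleton_iff] at hωi
    rw [hωi, le_div_iff₀ hε] at h₁
    rw [hωi, div_lt_iff₀ hε] at h₂
    constructor <;> linarith [hgap ω hωB]
  set rest := (S i)ᶜ.indicator (B.indicator g₁)
  have hrest : BddMeas mG rest := (h₁.indicator hB).indicator (hSm i).compl
  calc T (B.indicator g₁)
      ≤ T ((S i).indicator (fun _ => (i + 1) * ε) + rest) := by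
        refine hMo.mono hPC (h₁.indicator hB) ((BddMeas.indicator_const _ (hSm i)).add hrest)
          fun ω => ?_
        by_cases hω : ω ∈ S i
        · simp [rest, hω, hω.1, (hS ω hω).1]
        · simp [rest, hω]
    _ < T ((S i).indicator (fun _ => (i + 2) * ε) + rest) :=
        hMo _ _ (by linarith) _ (h₁.indicator hB) _ (hSm i) hi
    _ ≤ T (B.indicator g₂) := by
        refine hMo.mono hPC ((BddMeas.indicator_const _ (hSm i)).add hrest) (h₂.indicator hB)
          fun ω => ?_
        by_cases hω : ω ∈ S i
        · simp [rest, hω, hω.1, (hS ω hω).2]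
        · by_cases hωB : ω ∈ B
          · simpa [rest, hω, hωB] using (le_add_of_nonneg_right hδ.le).trans (hgap ω hωB)
          · simp [rest, hω, hωB]

lemma setOf_lt_mem_nullG (hMo : GMo mG T) (hPC : GPC mG T) {g₁ g₂ : Ω → ℝ}
    (h₁ : BddMeas mG g₁) (h₂ : BddMeas mG g₂)
    (heq : ∀ A, MeasurableSet[mG] A → T (A.indicator g₁) = T (A.indicator g₂)) :
    {ω | g₁ ω < g₂ ω} ∈ NullG mG T := by
  have hcover : {ω | g₁ ω < g₂ ω} = ⋃ n : ℕ, {ω | g₁ ω + 1 / (n + 1) ≤ g₂ ω} := by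
    ext ω
    simp only [Set.mem_ofPred_eq, Set.mem_iUnion]
    constructor
    · intro h
      obtain ⟨n, hn⟩ := exists_nat_one_div_lt (sub_pos.2 h)
      exact ⟨n, by linarith⟩
    · rintro ⟨n, hn⟩
      linarith [n.one_div_pos_of_nat (α := ℝ)]
  rw [hcover]
  refine iUnion_mem_nullG hPC fun n => ?_
  have hm : MeasurableSet[mG] {ω | g₁ ω + 1 / (n + 1) ≤ g₂ ω} :=
    measurableSet_le (h₁.1.add_const _) h₂.1
  by_contra hn
  exact (hMo.apply_indicator_lt_of_add_le hPC hm hn h₁ h₂ n.one_div_pos_of_nat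
    fun ω hω => hω).ne (heq _ hm)

lemma setOf_ne_mem_nullG (hMo : GMo mG T) (hPC : GPC mG T) {g₁ g₂ : Ω → ℝ}
    (h₁ : BddMeas mG g₁) (h₂ : BddMeas mG g₂)
    (heq : ∀ A, MeasurableSet[mG] A → T (A.indicator g₁) = T (A.indicator g₂)) :
    {ω | g₁ ω ≠ g₂ ω} ∈ NullG mG T := by
  simp_rw [ne_iff_lt_or_gt, Set.ofPred_or]
  exact union_mem_nullG (setOf_lt_mem_nullG hMo hPC h₁ h₂ heq)
    (setOf_lt_mem_nullG hMo hPC h₂ h₁ fun A hA => (heq A hA).symm)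

/-! ### Pasting -/

lemma GPC.continuous_apply_indicator_const (hPC : GPC mG T) {A : Set Ω}
    (hA : MeasurableSet[mG] A) : Continuous fun x : ℝ => T (A.indicator fun _ => x) := by
  refine SeqContinuous.continuous fun u x hu => ?_
  obtain ⟨C, hC⟩ := hu.abs.bddAbove_range
  refine hPC _ _ (fun n => BddMeas.indicator_const (u n) hA) (BddMeas.indicator_const x hA)
    ⟨C, fun n ω => (norm_indicator_le_norm_self (fun _ => u n) ω).trans (hC ⟨n, rfl⟩)⟩
    fun ω => ?_
  by_cases h : ω ∈ A
  · simpa [h] using hu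
  · simp [h]

lemma GPC.exists_indicator_const_eq (hPC : GPC mG T) {A : Set Ω} (hA : MeasurableSet[mG] A)
    {a b : ℝ} (hab : a ≤ b) (ha : T (A.indicator fun _ => a) ≤ T (A.indicator f))
    (hb : T (A.indicator f) ≤ T (A.indicator fun _ => b)) :
    ∃ c ∈ Set.Icc a b, T (A.indicator fun _ => c) = T (A.indicator f) :=
  intermediate_value_Icc hab (hPC.continuous_apply_indicator_const hA).continuousOn ⟨ha, hb⟩

lemma exists_indicator_const_eq_of_le (hMo : GMo mG T) (hPC : GPC mG T) (hNB : GNB mG T f)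
    {A : Set Ω} (hA : MeasurableSet[mG] A) {x : ℝ}
    (hx : T (A.indicator f) ≤ T (A.indicator fun _ => x)) :
    ∃ c ≤ x, T (A.indicator fun _ => c) = T (A.indicator f) := by
  obtain ⟨c, hc, hceq⟩ := hPC.exists_indicator_const_eq hA (min_le_right (-supNorm f) x)
    ((hMo.monotone_apply_indicator_const hA (min_le_left _ x)).trans (hNB A hA).1) hx
  exact ⟨c, hc.2, hceq⟩

lemma exists_indicator_const_eq_of_ge (hMo : GMo mG T) (hPC : GPC mG T) (hNB : GNB mG T f)
    {A : Set Ω} (hA : MeasurableSet[mG] A) {x : ℝ}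
    (hx : T (A.indicator fun _ => x) ≤ T (A.indicator f)) :
    ∃ c ≥ x, T (A.indicator fun _ => c) = T (A.indicator f) := by
  obtain ⟨c, hc, hceq⟩ := hPC.exists_indicator_const_eq hA (le_max_right (supNorm f) x) hx
    ((hNB A hA).2.trans (hMo.monotone_apply_indicator_const hA (le_max_left _ x)))
  exact ⟨c, hc.1, hceq⟩

lemma GPS.apply_indicator_union (hPS : GPS mG T f) {A₁ A₂ : Set Ω} (hA₁ : MeasurableSet[mG] A₁)
    (hA₂ : MeasurableSet[mG] A₂) (hd : Disjoint A₁ A₂) {c₁ c₂ : ℝ}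
    (h₁ : T (A₁.indicator fun _ => c₁) = T (A₁.indicator f))
    (h₂ : T (A₂.indicator fun _ => c₂) = T (A₂.indicator f)) :
    T ((A₁ ∪ A₂).indicator f) = T (A₁.indicator (fun _ => c₁) + A₂.indicator fun _ => c₂) := by
  rw [indicator_union_eq_add hd]
  exact hPS A₁ A₂ hA₁ hA₂ hd c₁ c₂ h₁.symm h₂.symm

lemma GPS.apply_indicator_union_le (hPS : GPS mG T f) (hMo : GMo mG T) (hPC : GPC mG T)
    (hNB : GNB mG T f) {A₁ A₂ : Set Ω} (hA₁ : MeasurableSet[mG] A₁) (hA₂ : MeasurableSet[mG] A₂)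
    (hd : Disjoint A₁ A₂) {x₁ x₂ : ℝ} (h₁ : T (A₁.indicator f) ≤ T (A₁.indicator fun _ => x₁))
    (h₂ : T (A₂.indicator f) ≤ T (A₂.indicator fun _ => x₂)) :
    T ((A₁ ∪ A₂).indicator f) ≤ T (A₁.indicator (fun _ => x₁) + A₂.indicator fun _ => x₂) := by
  obtain ⟨c₁, hc₁, he₁⟩ := exists_indicator_const_eq_of_le hMo hPC hNB hA₁ h₁
  obtain ⟨c₂, hc₂, he₂⟩ := exists_indicator_const_eq_of_le hMo hPC hNB hA₂ h₂
  rw [hPS.apply_indicator_union hA₁ hA₂ hd he₁ he₂]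
  exact hMo.mono hPC ((BddMeas.indicator_const _ hA₁).add (BddMeas.indicator_const _ hA₂))
    ((BddMeas.indicator_const _ hA₁).add (BddMeas.indicator_const _ hA₂)) fun ω =>
    add_le_add (Set.indicator_le_indicator hc₁) (Set.indicator_le_indicator hc₂)

lemma GPS.le_apply_indicator_union (hPS : GPS mG T f) (hMo : GMo mG T) (hPC : GPC mG T)
    (hNB : GNB mG T f) {A₁ A₂ : Set Ω} (hA₁ : MeasurableSet[mG] A₁) (hA₂ : MeasurableSet[mG] A₂)
    (hd : Disjoint A₁ A₂) {x₁ x₂ : ℝ} (h₁ : T (A₁.indicator fun _ => x₁) ≤ T (A₁.indicator f))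
    (h₂ : T (A₂.indicator fun _ => x₂) ≤ T (A₂.indicator f)) :
    T (A₁.indicator (fun _ => x₁) + A₂.indicator fun _ => x₂) ≤ T ((A₁ ∪ A₂).indicator f) := by
  obtain ⟨c₁, hc₁, he₁⟩ := exists_indicator_const_eq_of_ge hMo hPC hNB hA₁ h₁
  obtain ⟨c₂, hc₂, he₂⟩ := exists_indicator_const_eq_of_ge hMo hPC hNB hA₂ h₂
  rw [hPS.apply_indicator_union hA₁ hA₂ hd he₁ he₂]
  exact hMo.mono hPC ((BddMeas.indicator_const _ hA₁).add (BddMeas.indicator_const _ hA₂))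
    ((BddMeas.indicator_const _ hA₁).add (BddMeas.indicator_const _ hA₂)) fun ω =>
    add_le_add (Set.indicator_le_indicator hc₁) (Set.indicator_le_indicator hc₂)

lemma GQL.apply_indicator_add_compl_eq (hQL : GQL mG T) {A : Set Ω} (hA : MeasurableSet[mG] A)
    {g₁ g₂ : Ω → ℝ} (h₁ : BddMeas mG g₁) (h₂ : BddMeas mG g₂)
    (heq : T (A.indicator g₁) = T (A.indicator g₂)) {g : Ω → ℝ} (hg : BddMeas mG g) :
    T (A.indicator g₁ + Aᶜ.indicator g) = T (A.indicator g₂ + Aᶜ.indicator g) := by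
  have key : ∀ u v : Ω → ℝ, BddMeas mG u → BddMeas mG v →
      T (A.indicator u) ≤ T (A.indicator v) →
      T (A.indicator u + Aᶜ.indicator g) ≤ T (A.indicator v + Aᶜ.indicator g) :=
    fun u v hu hv h => hQL u v hu hv A hA ⟨0, BddMeas.zero, by simpa using h⟩ g hg
  exact le_antisymm (key _ _ h₁ h₂ heq.le) (key _ _ h₂ h₁ heq.ge)

/-- (G-PS) only pastes two pieces; to add a piece to those already pasted, (G-QL) replaces the
step function on their union by a single constant. -/
lemma GPS.apply_indicator_biUnion (hPS : GPS mG T f) (hQL : GQL mG T) (hMo : GMo mG T)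
    (hPC : GPC mG T) (hNB : GNB mG T f) {ι : Type*} (s : Finset ι) {A : ι → Set Ω}
    (hA : ∀ i ∈ s, MeasurableSet[mG] (A i)) (hd : (s : Set ι).PairwiseDisjoint A) {c : ι → ℝ}
    (hc : ∀ i ∈ s, T ((A i).indicator fun _ => c i) = T ((A i).indicator f)) :
    T ((⋃ i ∈ s, A i).indicator f) = T (∑ i ∈ s, (A i).indicator fun _ => c i) := by
  classical
  induction s using Finset.induction_on with
  | empty =>
    simp only [Finset.notMem_empty, Set.iUnion_of_empty, Set.iUnion_empty, Set.indicator_empty,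
      Finset.sum_empty]
    rfl
  | insert a s ha ih =>
    set W := ⋃ i ∈ s, A i
    set S := ∑ i ∈ s, (A i).indicator fun _ => c i
    have hAa := hA a (s.mem_insert_self a)
    have hW : MeasurableSet[mG] W :=
      s.measurableSet_biUnion fun i hi => hA i (Finset.mem_insert_of_mem hi)
    have hS : BddMeas mG S := BddMeas.finset_sum s fun i hi =>
      BddMeas.indicator_const _ (hA i (Finset.mem_insert_of_mem hi))
    have hdW : Disjoint (A a) W := Set.disjoint_iUnion₂_right.2 fun i hi =>
      hd (by simp) (by simp [hi]) fun h => ha (h ▸ hi)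
    have hWS : W.indicator S = S := by
      rw [Finset.indicator_sum]
      refine Finset.sum_congr rfl fun i hi => ?_
      rw [Set.indicator_indicator,
        Set.inter_eq_right.2 (Finset.subset_set_biUnion_of_mem (f := A) hi)]
    have hSW : T (W.indicator f) = T S :=
      ih (fun i hi => hA i (Finset.mem_insert_of_mem hi))
        (hd.subset (by simp)) fun i hi => hc i (Finset.mem_insert_of_mem hi)
    obtain ⟨c', -, hc'⟩ := exists_indicator_const_eq_of_le hMo hPC hNB hW (hNB W hW).2
    have hql := hQL.apply_indicator_add_compl_eq hW (BddMeas.const c') hS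
      (by rw [hc', hSW, hWS]) (BddMeas.indicator_const (c a) hAa)
    rw [Set.indicator_indicator, Set.inter_eq_right.2 hdW.subset_compl_right, hWS] at hql
    rw [Finset.set_biUnion_insert, Finset.sum_insert ha,
      hPS.apply_indicator_union hAa hW hdW (hc a (s.mem_insert_self a)) hc', add_comm, hql,
      add_comm]

lemma le_apply_indicator_union (hPS : GPS mG T f) (hMo : GMo mG T) (hPC : GPC mG T)
    (hNB : GNB mG T f) {x : ℝ} {A₁ A₂ : Set Ω} (hA₁ : MeasurableSet[mG] A₁)
    (hA₂ : MeasurableSet[mG] A₂) (hd : Disjoint A₁ A₂)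
    (h₁ : T (A₁.indicator fun _ => x) ≤ T (A₁.indicator f))
    (h₂ : T (A₂.indicator fun _ => x) ≤ T (A₂.indicator f)) :
    T ((A₁ ∪ A₂).indicator fun _ => x) ≤ T ((A₁ ∪ A₂).indicator f) := by
  rw [indicator_union_eq_add hd]
  exact hPS.le_apply_indicator_union hMo hPC hNB hA₁ hA₂ hd h₁ h₂

lemma le_apply_indicator_iUnion (hPS : GPS mG T f) (hMo : GMo mG T) (hPC : GPC mG T)
    (hNB : GNB mG T f) {x : ℝ} {V : ℕ → Set Ω} (hV : Monotone V)
    (hVm : ∀ n, MeasurableSet[mG] (V n))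
    (h : ∀ n, T ((V n).indicator fun _ => x) ≤ T ((V n).indicator f)) :
    T ((⋃ n, V n).indicator fun _ => x) ≤ T ((⋃ n, V n).indicator f) := by
  refine le_of_tendsto' (hPC.tendsto_indicator_const_add_diff hV hVm x (-supNorm f)) fun n => ?_
  have hR : MeasurableSet[mG] ((⋃ k, V k) \ V n) := (MeasurableSet.iUnion hVm).diff (hVm n)
  have hle := hPS.le_apply_indicator_union hMo hPC hNB (hVm n) hR Set.disjoint_sdiff_right (h n)
    (hNB _ hR).1
  rwa [Set.union_sdiff_cancel (Set.subset_iUnion V n)] at hle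

/-! ### Exhaustion and sub-level sets -/

lemma GMo.apply_indicator_one_mono (hMo : GMo mG T) (hPC : GPC mG T) {A A' : Set Ω}
    (hA : MeasurableSet[mG] A) (hA' : MeasurableSet[mG] A') (h : A ⊆ A') :
    T (A.indicator fun _ => 1) ≤ T (A'.indicator fun _ => 1) :=
  hMo.mono hPC (BddMeas.indicator_const 1 hA) (BddMeas.indicator_const 1 hA')
    fun _ => Set.indicator_le_indicator_of_subset h (fun _ => zero_le_one) _

lemma GMo.apply_indicator_one_lt_union (hMo : GMo mG T) {A E : Set Ω}
    (hA : MeasurableSet[mG] A) (hE : MeasurableSet[mG] E) (hd : Disjoint A E)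
    (hEn : E ∉ NullG mG T) :
    T (A.indicator fun _ => 1) < T ((A ∪ E).indicator fun _ => 1) := by
  have h := hMo 0 1 one_pos _ (BddMeas.indicator_const 1 hA) E hE hEn
  rwa [Set.indicator_indicator, Set.inter_eq_right.2 hd.subset_compl_right, Set.indicator_zero,
    ← Pi.zero_def, zero_add, add_comm, ← indicator_union_eq_add hd] at h

lemma exists_near_sup_step (hMo : GMo mG T) (hPC : GPC mG T) (P : Set Ω → Prop)
    (hPm : ∀ A, P A → MeasurableSet[mG] A) (hP0 : P ∅)
    (hPu : ∀ A B, P A → P B → Disjoint A B → P (A ∪ B)) {V : Set Ω} (hV : P V) {ε : ℝ}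
    (hε : 0 < ε) : ∃ V', P V' ∧ V ⊆ V' ∧ ∀ E, P E → Disjoint V E →
      T ((V ∪ E).indicator fun _ => 1) ≤ T (V'.indicator fun _ => 1) + ε := by
  set S := (fun E => T ((V ∪ E).indicator fun _ => 1)) '' {E | P E ∧ Disjoint V E}
  have hbdd : BddAbove S := ⟨T (Set.univ.indicator fun _ => 1), by
    rintro _ ⟨E, ⟨hE, -⟩, rfl⟩
    exact hMo.apply_indicator_one_mono hPC ((hPm V hV).union (hPm E hE)) .univ
      (Set.subset_univ _)⟩
  obtain ⟨_, ⟨E, ⟨hE, hVE⟩, rfl⟩, hlt⟩ := exists_lt_of_lt_csSup (s := S)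
    ⟨_, ∅, ⟨hP0, Set.disjoint_empty V⟩, rfl⟩ (sub_lt_self (sSup S) hε)
  refine ⟨V ∪ E, hPu V E hV hE hVE, Set.subset_union_left, fun E' hE' hVE' => ?_⟩
  linarith [le_csSup hbdd ⟨E', ⟨hE', hVE'⟩, rfl⟩]

/-- A greedy sequence in the class nearly maximizes the gauge `A ↦ T(1_A)` at each step; the gauge
is bounded, continuous along increasing unions by (G-PC), and strictly increases when a disjoint
non-null set is added, by (G-Mo). -/
lemma exists_mem_forall_disjoint_mem_nullG (hMo : GMo mG T) (hPC : GPC mG T)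
    (P : Set Ω → Prop) (hPm : ∀ A, P A → MeasurableSet[mG] A) (hP0 : P ∅)
    (hPu : ∀ A B, P A → P B → Disjoint A B → P (A ∪ B))
    (hPi : ∀ V : ℕ → Set Ω, Monotone V → (∀ n, P (V n)) → P (⋃ n, V n)) :
    ∃ W, P W ∧ ∀ E, P E → Disjoint W E → E ∈ NullG mG T := by
  set m : Set Ω → ℝ := fun A => T (A.indicator fun _ => 1)
  have hstep : ∀ (n : ℕ) (V : Set Ω), ∃ V', P V → P V' ∧ V ⊆ V' ∧
      ∀ E, P E → Disjoint V E → m (V ∪ E) ≤ m V' + 1 / (n + 1) := fun n V => by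
    by_cases hV : P V
    · obtain ⟨V', hV'⟩ := exists_near_sup_step hMo hPC P hPm hP0 hPu hV n.one_div_pos_of_nat
      exact ⟨V', fun _ => hV'⟩
    · exact ⟨V, fun h => absurd h hV⟩
  choose step hstep using hstep
  set V : ℕ → Set Ω := fun n => Nat.rec ∅ step n
  have hVP : ∀ n, P (V n) := fun n => by
    induction n with
    | zero => exact hP0
    | succ n ih => exact (hstep n (V n) ih).1
  have hVm : Monotone V := monotone_nat_of_le_succ fun n => (hstep n (V n) (hVP n)).2.1
  set W := ⋃ n, V n
  have hWm : MeasurableSet[mG] W := hPm W (hPi V hVm hVP)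
  refine ⟨W, hPi V hVm hVP, fun E hE hWE => by_contra fun hEn => ?_⟩
  have hEm := hPm E hE
  have hunion : ∀ A, Disjoint A E → (A ∪ E).indicator (fun _ => (1 : ℝ)) =
      E.indicator (fun _ => 1) + A.indicator fun _ => 1 := fun A h => by
    rw [indicator_union_eq_add h, add_comm]
  have hlim : Tendsto (fun n => m (V n ∪ E)) atTop (𝓝 (m (W ∪ E))) := by
    simp only [m, hunion _ hWE, fun n => hunion _ (hWE.mono_left (Set.subset_iUnion V n))]
    exact hPC.tendsto_add_indicator hVm (fun n => hPm _ (hVP n)) (BddMeas.const 1)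
      (BddMeas.indicator_const 1 hEm)
  have hbound : ∀ n : ℕ, m (V n ∪ E) ≤ m W + 1 / (n + 1) := fun n =>
    ((hstep n (V n) (hVP n)).2.2 E hE (hWE.mono_left (Set.subset_iUnion V n))).trans
      (add_le_add (hMo.apply_indicator_one_mono hPC (hPm _ (hVP (n + 1))) hWm
        (Set.subset_iUnion V (n + 1))) le_rfl)
  have hle : m (W ∪ E) ≤ m W := le_of_tendsto_of_tendsto' hlim
    (by simpa using tendsto_const_nhds.add (tendsto_one_div_add_atTop_nhds_zero_nat (𝕜 := ℝ)))
    hbound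
  exact (hMo.apply_indicator_one_lt_union hWm hEm hWE hEn).not_ge hle

def SubLevel (mG : MeasurableSpace Ω) (T : (Ω → ℝ) → ℝ) (f : Ω → ℝ) (x : ℝ) (A : Set Ω) :
    Prop :=
  MeasurableSet[mG] A ∧
    ∀ B ⊆ A, MeasurableSet[mG] B → T (B.indicator f) ≤ T (B.indicator fun _ => x)

lemma subLevel_empty (x : ℝ) : SubLevel mG T f x ∅ :=
  ⟨.empty, fun B hB _ => by simp [Set.subset_empty_iff.1 hB]⟩

lemma SubLevel.mono (hMo : GMo mG T) {x y : ℝ} {A : Set Ω} (h : SubLevel mG T f x A)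
    (hxy : x ≤ y) : SubLevel mG T f y A :=
  ⟨h.1, fun B hBA hB => (h.2 B hBA hB).trans (hMo.monotone_apply_indicator_const hB hxy)⟩

lemma subLevel_univ (hMo : GMo mG T) (hNB : GNB mG T f) {x : ℝ} (hx : supNorm f ≤ x) :
    SubLevel mG T f x Set.univ :=
  ⟨.univ, fun B _ hB => (hNB B hB).2.trans (hMo.monotone_apply_indicator_const hB hx)⟩

lemma SubLevel.mem_nullG_of_lt (hMo : GMo mG T) (hNB : GNB mG T f) {x : ℝ} {A : Set Ω}
    (h : SubLevel mG T f x A) (hx : x < -supNorm f) : A ∈ NullG mG T := by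
  by_contra hA
  exact ((h.2 A subset_rfl h.1).trans_lt (hMo.strictMono_apply_indicator_const h.1 hA hx)).not_ge
    (hNB A h.1).1

lemma SubLevel.union (hPS : GPS mG T f) (hMo : GMo mG T) (hPC : GPC mG T) (hNB : GNB mG T f)
    {x : ℝ} {A₁ A₂ : Set Ω} (h₁ : SubLevel mG T f x A₁) (h₂ : SubLevel mG T f x A₂) :
    SubLevel mG T f x (A₁ ∪ A₂) := by
  refine ⟨h₁.1.union h₂.1, fun B hBA hB => ?_⟩
  have hd : Disjoint (B ∩ A₁) (B \ A₁) :=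
    Set.disjoint_sdiff_left.symm.mono_left Set.inter_subset_right
  have hle := hPS.apply_indicator_union_le hMo hPC hNB (hB.inter h₁.1) (hB.diff h₁.1) hd
    (h₁.2 _ Set.inter_subset_right (hB.inter h₁.1))
    (h₂.2 _ (fun ω hω => (hBA hω.1).resolve_left hω.2) (hB.diff h₁.1))
  rwa [← indicator_union_eq_add hd, Set.inter_union_sdiff] at hle

lemma SubLevel.iUnion_of_monotone (hPS : GPS mG T f) (hMo : GMo mG T) (hPC : GPC mG T)
    (hNB : GNB mG T f) {x : ℝ} {V : ℕ → Set Ω} (hV : Monotone V)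
    (h : ∀ n, SubLevel mG T f x (V n)) : SubLevel mG T f x (⋃ n, V n) := by
  refine ⟨.iUnion fun n => (h n).1, fun B hBV hB => ?_⟩
  have hBV' : B = ⋃ n, B ∩ V n := by rw [← Set.inter_iUnion, Set.inter_eq_left.2 hBV]
  have hm : ∀ n, MeasurableSet[mG] (B ∩ V n) := fun n => hB.inter (h n).1
  have hlim := hPC.tendsto_indicator_const_add_diff
    (fun m n hmn => Set.inter_subset_inter_right B (hV hmn)) hm x (supNorm f)
  rw [← hBV'] at hlim
  refine ge_of_tendsto' hlim fun n => ?_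
  have hle := hPS.apply_indicator_union_le hMo hPC hNB (hm n) (hB.diff (hm n))
    Set.disjoint_sdiff_right ((h n).2 _ Set.inter_subset_right (hm n))
    (hNB _ (hB.diff (hm n))).2
  rwa [Set.union_sdiff_cancel Set.inter_subset_left] at hle

lemma SubLevel.iUnion (hPS : GPS mG T f) (hMo : GMo mG T) (hPC : GPC mG T) (hNB : GNB mG T f)
    {x : ℝ} {ι : Sort*} [Countable ι] {A : ι → Set Ω} (h : ∀ i, SubLevel mG T f x (A i)) :
    SubLevel mG T f x (⋃ i, A i) := by
  cases isEmpty_or_nonempty ι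
  · simpa using subLevel_empty x
  obtain ⟨e, he⟩ := exists_surjective_nat ι
  rw [← he.iUnion_comp A, ← Set.iUnion_accumulate]
  refine .iUnion_of_monotone hPS hMo hPC hNB Set.monotone_accumulate fun n => ?_
  induction n with
  | zero => simpa [Set.accumulate] using h (e 0)
  | succ n ih => rw [Set.accumulate_succ]; exact ih.union hPS hMo hPC hNB (h (e (n + 1)))

lemma exists_subLevel_forall_disjoint_mem_nullG (hPS : GPS mG T f) (hMo : GMo mG T)
    (hPC : GPC mG T) (hNB : GNB mG T f) (x : ℝ) :
    ∃ C, SubLevel mG T f x C ∧ ∀ E, SubLevel mG T f x E → Disjoint C E → E ∈ NullG mG T :=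
  exists_mem_forall_disjoint_mem_nullG hMo hPC _ (fun _ h => h.1) (subLevel_empty x)
    (fun _ _ h₁ h₂ _ => h₁.union hPS hMo hPC hNB h₂)
    fun _ hV h => .iUnion_of_monotone hPS hMo hPC hNB hV h

/-- Were it false, exhausting `B` by sets on which `T` sees `f ≥ x` would leave a non-null
remainder without non-null sub-level parts, hence containing a non-null set on which `T` sees
`f > x`. -/
lemma le_apply_indicator_of_disjoint (hPS : GPS mG T f) (hMo : GMo mG T) (hPC : GPC mG T)
    (hNB : GNB mG T f) {x : ℝ} {C : Set Ω}
    (hmax : ∀ E, SubLevel mG T f x E → Disjoint C E → E ∈ NullG mG T) {B : Set Ω}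
    (hB : MeasurableSet[mG] B) (hCB : Disjoint C B) :
    T (B.indicator fun _ => x) ≤ T (B.indicator f) := by
  by_contra! hlt
  obtain ⟨W, ⟨hWB, hWm, hW⟩, hWmax⟩ := exists_mem_forall_disjoint_mem_nullG hMo hPC
    (fun V => V ⊆ B ∧ MeasurableSet[mG] V ∧ T (V.indicator fun _ => x) ≤ T (V.indicator f))
    (fun _ h => h.2.1) ⟨Set.empty_subset B, .empty, by simp⟩
    (fun V₁ V₂ h₁ h₂ hd => ⟨Set.union_subset h₁.1 h₂.1, h₁.2.1.union h₂.2.1,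
      le_apply_indicator_union hPS hMo hPC hNB h₁.2.1 h₂.2.1 hd h₁.2.2 h₂.2.2⟩)
    fun V hV h => ⟨Set.iUnion_subset fun n => (h n).1, .iUnion fun n => (h n).2.1,
      le_apply_indicator_iUnion hPS hMo hPC hNB hV (fun n => (h n).2.1) fun n => (h n).2.2⟩
  have hRm : MeasurableSet[mG] (B \ W) := hB.diff hWm
  have hRn : B \ W ∉ NullG mG T := fun hR => by
    have := le_apply_indicator_union hPS hMo hPC hNB hWm hRm Set.disjoint_sdiff_right hW
      (by rw [apply_indicator_of_mem_nullG hR (BddMeas.const x),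
        hNB.apply_indicator_of_mem_nullG hR])
    rw [Set.union_sdiff_cancel hWB] at this
    exact this.not_gt hlt
  obtain ⟨E, hER, hEm, hE⟩ : ∃ E ⊆ B \ W, MeasurableSet[mG] E ∧
      T (E.indicator fun _ => x) < T (E.indicator f) := by
    simpa [SubLevel, hRm] using fun hR => hRn (hmax _ hR (hCB.mono_right Set.sdiff_subset))
  have hEn := hWmax E ⟨hER.trans Set.sdiff_subset, hEm, hE.le⟩
    (Set.disjoint_of_subset_right hER Set.disjoint_sdiff_right)
  rw [apply_indicator_of_mem_nullG hEn (BddMeas.const x),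
    hNB.apply_indicator_of_mem_nullG hEn] at hE
  exact hE.false

/-! ### The conditional mean -/

/-- Models the level sets `{ĝ ≤ q}` of the conditional mean `ĝ = levelFun D b`. -/
structure IsLevelFamily (mG : MeasurableSpace Ω) (T : (Ω → ℝ) → ℝ) (f : Ω → ℝ)
    (D : ℚ → Set Ω) (a b : ℚ) : Prop where
  le : a ≤ b
  mono : Monotone D
  eq_empty : D a = ∅
  eq_univ : D b = Set.univ
  subLevel : ∀ q : ℚ, SubLevel mG T f q (D q)
  le_of_disjoint : ∀ (q : ℚ) (B : Set Ω), MeasurableSet[mG] B → Disjoint (D q) B →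
    T (B.indicator fun _ => (q : ℝ)) ≤ T (B.indicator f)

/-- `D q = ⋃_{p ≤ q} C p` for maximal sub-level sets `C p`, chosen empty below `-‖f‖` and full
above `‖f‖`. -/
lemma exists_isLevelFamily (hPS : GPS mG T f) (hMo : GMo mG T) (hPC : GPC mG T)
    (hNB : GNB mG T f) : ∃ D a b, IsLevelFamily mG T f D a b := by
  have hM := supNorm_nonneg f
  have hC : ∀ q : ℚ, ∃ C, SubLevel mG T f q C ∧
      (∀ E, SubLevel mG T f q E → Disjoint C E → E ∈ NullG mG T) ∧
      ((q : ℝ) < -supNorm f → C = ∅) ∧ (supNorm f ≤ q → C = Set.univ) := by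
    intro q
    by_cases h₁ : (q : ℝ) < -supNorm f
    · exact ⟨∅, subLevel_empty _, fun E hE _ => hE.mem_nullG_of_lt hMo hNB h₁, fun _ => rfl,
        fun h₂ => by linarith⟩
    by_cases h₂ : supNorm f ≤ q
    · exact ⟨Set.univ, subLevel_univ hMo hNB h₂,
        fun E _ hE => Set.univ_disjoint.1 hE ▸ empty_mem_nullG, fun h => absurd h h₁,
        fun _ => rfl⟩
    obtain ⟨C, hC, hmax⟩ := exists_subLevel_forall_disjoint_mem_nullG hPS hMo hPC hNB q
    exact ⟨C, hC, hmax, fun h => absurd h h₁, fun h => absurd h h₂⟩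
  choose C hC hmax hCa hCb using hC
  obtain ⟨a, ha⟩ := exists_rat_lt (-supNorm f)
  obtain ⟨b, hb⟩ := exists_rat_gt (supNorm f)
  refine ⟨fun q => ⋃ (p : ℚ) (_ : p ≤ q), C p, a, b, ⟨?_, ?_, ?_, ?_, ?_, ?_⟩⟩
  · exact_mod_cast (show (a : ℝ) ≤ b by linarith)
  · exact fun q q' h => Set.iUnion₂_mono' fun p hp => ⟨p, hp.trans h, subset_rfl⟩
  · exact Set.iUnion_eq_empty.2 fun p => Set.iUnion_eq_empty.2 fun hp =>
      hCa p ((Rat.cast_le.2 hp).trans_lt ha)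
  · exact Set.eq_univ_of_univ_subset ((hCb b hb.le).symm.subset.trans
      (Set.subset_iUnion₂ (s := fun p (_ : p ≤ b) => C p) b le_rfl))
  · exact fun q => .iUnion hPS hMo hPC hNB fun p => .iUnion hPS hMo hPC hNB fun hp =>
      (hC p).mono hMo (Rat.cast_le.2 hp)
  · exact fun q B hB hd => le_apply_indicator_of_disjoint hPS hMo hPC hNB (hmax q) hB
      (hd.mono_left (Set.subset_iUnion₂ (s := fun p (_ : p ≤ q) => C p) q le_rfl))

open Classical in
/-- `inf {q | ω ∈ D q}`, written as an infimum over all of `ℚ` that takes the value `b` off the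
index set: harmless, as `D b = univ` for a level family. -/
noncomputable def levelFun (D : ℚ → Set Ω) (b : ℚ) (ω : Ω) : ℝ :=
  ⨅ q : ℚ, if ω ∈ D q then (q : ℝ) else b

lemma exists_mem_sdiff_of_notMem_of_mem {α : Type*} {S : ℕ → Set α} {x : α} {N : ℕ}
    (h0 : x ∉ S 0) (hN : x ∈ S N) : ∃ i < N, x ∈ S (i + 1) \ S i := by
  induction N with
  | zero => exact absurd hN h0
  | succ N ih =>
    by_cases h : x ∈ S N
    · obtain ⟨i, hi, hx⟩ := ih h
      exact ⟨i, hi.trans N.lt_succ_self, hx⟩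
    · exact ⟨N, N.lt_succ_self, hN, h⟩

lemma pairwiseDisjoint_inter_sdiff {α : Type*} {S : ℕ → Set α} (hS : Monotone S) (A : Set α)
    (s : Set ℕ) : s.PairwiseDisjoint fun i => A ∩ (S (i + 1) \ S i) := by
  intro i hi j hj hij
  wlog hlt : i < j generalizing i j
  · exact Disjoint.symm (this hj hi hij.symm (lt_of_le_of_ne (not_lt.1 hlt) hij.symm))
  exact Set.disjoint_left.2 fun x hi hj => hj.2.2 (hS hlt hi.2.1)

lemma biUnion_range_inter_sdiff {α : Type*} {S : ℕ → Set α} {N : ℕ} (h0 : S 0 = ∅)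
    (hN : S N = Set.univ) (A : Set α) : ⋃ i ∈ Finset.range N, A ∩ (S (i + 1) \ S i) = A := by
  refine Set.Subset.antisymm (Set.iUnion₂_subset fun i _ => Set.inter_subset_left)
    fun x hx => ?_
  obtain ⟨i, hi, hmem⟩ := exists_mem_sdiff_of_notMem_of_mem (S := S) (x := x) (N := N)
    (by simp [h0]) (by simp [hN])
  exact Set.mem_biUnion (Finset.mem_range.2 hi) ⟨hx, hmem⟩

namespace IsLevelFamily

variable {D : ℚ → Set Ω} {a b : ℚ}

lemma levelFun_le (hD : IsLevelFamily mG T f D a b) {q : ℚ} {ω : Ω} (h : ω ∈ D q) :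
    levelFun D b ω ≤ q := by
  refine (ciInf_le ⟨(a : ℝ), ?_⟩ q).trans (by rw [if_pos h])
  rintro _ ⟨p, rfl⟩
  dsimp only
  split_ifs with hp
  · by_contra! hpa
    have := hD.mono (Rat.cast_le.1 hpa.le) hp
    rw [hD.eq_empty] at this
    exact this
  · exact_mod_cast hD.le

lemma le_levelFun (hD : IsLevelFamily mG T f D a b) {q : ℚ} {ω : Ω} (h : ω ∉ D q) :
    (q : ℝ) ≤ levelFun D b ω := by
  refine le_ciInf fun p => ?_
  split_ifs with hp
  · have : q ≤ p := by
      by_contra! hpq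
      exact h (hD.mono hpq.le hp)
    exact_mod_cast this
  · have : q ≤ b := by
      by_contra! hbq
      exact h (hD.mono hbq.le (hD.eq_univ ▸ Set.mem_univ ω))
    exact_mod_cast this

lemma bddMeas_levelFun (hD : IsLevelFamily mG T f D a b) : BddMeas mG (levelFun D b) :=
  ⟨Measurable.iInf fun q => Measurable.ite (hD.subLevel q).1 measurable_const measurable_const,
    max |(a : ℝ)| |(b : ℝ)|, fun ω => abs_le_max_abs_abs
      (hD.le_levelFun (by simp [hD.eq_empty])) (hD.levelFun_le (by simp [hD.eq_univ]))⟩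

lemma exists_indicator_const_eq (hD : IsLevelFamily mG T f D a b) (hPC : GPC mG T) {p q : ℚ}
    (hpq : p ≤ q) {B : Set Ω} (hB : MeasurableSet[mG] B) (hBq : B ⊆ D q) (hBp : Disjoint (D p) B) :
    ∃ c ∈ Set.Icc (p : ℝ) q, T (B.indicator fun _ => c) = T (B.indicator f) :=
  hPC.exists_indicator_const_eq hB (Rat.cast_le.2 hpq) (hD.le_of_disjoint p B hB hBp)
    ((hD.subLevel q).2 B hBq hB)

/-- On the band of `A` between consecutive levels `rᵢ`, `rᵢ₊₁` of a uniform grid of `[a, b]`,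
`T` sees `f` between `rᵢ` and `rᵢ₊₁`, hence equal to a constant `cᵢ` there; the finitely many
bands paste to the step function `∑ cᵢ 1_{band i}`. -/
lemma exists_approx (hD : IsLevelFamily mG T f D a b) (hPS : GPS mG T f) (hQL : GQL mG T)
    (hMo : GMo mG T) (hPC : GPC mG T) (hNB : GNB mG T f) {A : Set Ω} (hA : MeasurableSet[mG] A)
    (n : ℕ) : ∃ s, BddMeas mG s ∧ T (A.indicator f) = T s ∧
      ∀ ω, |s ω - A.indicator (levelFun D b) ω| ≤ ((b : ℝ) - a) / (n + 1) := by
  set r : ℕ → ℚ := fun i => a + i * ((b - a) / (n + 1))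
  have hr : Monotone r := fun i j hij => by
    have : (0 : ℚ) ≤ (b - a) / (n + 1) := div_nonneg (sub_nonneg.2 hD.le) n.cast_add_one_pos.le
    simp only [r]
    gcongr
  have hr0 : r 0 = a := by simp [r]
  have hrN : r (n + 1) = b := by simp only [r]; push_cast; field_simp; ring
  have hr_succ : ∀ i, ((r (i + 1) : ℚ) : ℝ) - r i = ((b : ℝ) - a) / (n + 1) := fun i => by
    simp only [r]; push_cast; ring
  set E : ℕ → Set Ω := fun i => A ∩ (D (r (i + 1)) \ D (r i))
  have hEm : ∀ i, MeasurableSet[mG] (E i) := fun i =>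
    hA.inter ((hD.subLevel _).1.diff (hD.subLevel _).1)
  have hdisj : ((Finset.range (n + 1) : Set ℕ)).PairwiseDisjoint E :=
    pairwiseDisjoint_inter_sdiff (hD.mono.comp hr) A _
  have hcover : ⋃ i ∈ Finset.range (n + 1), E i = A :=
    biUnion_range_inter_sdiff (S := D ∘ r) (by simp [hr0, hD.eq_empty])
      (by simp [hrN, hD.eq_univ]) A
  have hc : ∀ i, ∃ c ∈ Set.Icc (r i : ℝ) (r (i + 1)),
      T ((E i).indicator fun _ => c) = T ((E i).indicator f) := fun i =>
    hD.exists_indicator_const_eq hPC (hr i.le_succ) (hEm i) (fun _ hω => hω.2.1)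
      (Set.disjoint_left.2 fun _ h hE => hE.2.2 h)
  choose c hcI hc using hc
  refine ⟨∑ i ∈ Finset.range (n + 1), (E i).indicator fun _ => c i,
    BddMeas.finset_sum _ fun i _ => BddMeas.indicator_const _ (hEm i), ?_, fun ω => ?_⟩
  · conv_lhs => rw [← hcover]
    exact hPS.apply_indicator_biUnion hQL hMo hPC hNB _ (fun i _ => hEm i) hdisj fun i _ => hc i
  rw [Finset.sum_apply]
  by_cases hω : ω ∈ A
  · obtain ⟨i, hi, hωE⟩ : ∃ i ∈ Finset.range (n + 1), ω ∈ E i := by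
      rw [← hcover] at hω
      simpa using hω
    rw [Finset.sum_eq_single_of_mem i hi fun j hj hji => Set.indicator_of_notMem
      (fun hωj => Set.disjoint_left.1 (hdisj hj hi hji) hωj hωE) _, Set.indicator_of_mem hωE,
      Set.indicator_of_mem hω, abs_le, ← hr_succ i]
    have := hD.le_levelFun hωE.2.2
    have := hD.levelFun_le hωE.2.1
    constructor <;> linarith [(hcI i).1, (hcI i).2]
  · rw [Finset.sum_eq_zero fun i _ => Set.indicator_of_notMem (fun h => hω h.1) _,
      Set.indicator_of_notMem hω, sub_zero, abs_zero, ← hr_succ 0, sub_nonneg]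
    exact Rat.cast_le.2 (hr (Nat.zero_le 1))

lemma apply_indicator_eq_levelFun (hD : IsLevelFamily mG T f D a b) (hPS : GPS mG T f)
    (hQL : GQL mG T) (hMo : GMo mG T) (hPC : GPC mG T) (hNB : GNB mG T f) {A : Set Ω}
    (hA : MeasurableSet[mG] A) : T (A.indicator f) = T (A.indicator (levelFun D b)) := by
  choose s hs hTs hsd using hD.exists_approx hPS hQL hMo hPC hNB hA
  have hg := hD.bddMeas_levelFun.indicator hA
  obtain ⟨C, hC⟩ := hg.2
  have hba : (0 : ℝ) ≤ b - a := sub_nonneg.2 (Rat.cast_le.2 hD.le)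
  have hδ : Tendsto (fun n : ℕ => ((b : ℝ) - a) / (n + 1)) atTop (𝓝 0) := by
    simpa [div_eq_mul_inv] using
      (tendsto_one_div_add_atTop_nhds_zero_nat (𝕜 := ℝ)).const_mul ((b : ℝ) - a)
  refine tendsto_nhds_unique (tendsto_const_nhds.congr hTs) (hPC s _ hs hg
    ⟨(b - a) + C, fun n ω => ?_⟩ fun ω => ?_)
  · have := abs_sub_abs_le_abs_sub (s n ω) (A.indicator (levelFun D b) ω)
    have := (hsd n ω).trans (div_le_self hba (by linarith [n.cast_nonneg (α := ℝ)]))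
    linarith [hC ω]
  · rw [tendsto_iff_norm_sub_tendsto_zero]
    exact squeeze_zero (fun n => norm_nonneg _) (fun n => hsd n ω) hδ

end IsLevelFamily

end

theorem stmt12_general {Ω : Type*} (mG : MeasurableSpace Ω)
    (T : (Ω → ℝ) → ℝ) (hMo : GMo mG T) (hQL : GQL mG T) (hPC : GPC mG T)
    (f : Ω → ℝ) (hPS : GPS mG T f) (hNB : GNB mG T f) :
    ∃ gh : Ω → ℝ, BddMeas mG gh ∧
      (∀ A : Set Ω, MeasurableSet[mG] A → T (A.indicator f) = T (A.indicator gh)) ∧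
      ∀ gt : Ω → ℝ, BddMeas mG gt →
        (∀ A : Set Ω, MeasurableSet[mG] A → T (A.indicator f) = T (A.indicator gt)) →
        {ω | gh ω ≠ gt ω} ∈ NullG mG T := by
  obtain ⟨D, a, b, hD⟩ := exists_isLevelFamily hPS hMo hPC hNB
  have hmean : ∀ A, MeasurableSet[mG] A → T (A.indicator f) = T (A.indicator (levelFun D b)) :=
    fun A hA => hD.apply_indicator_eq_levelFun hPS hQL hMo hPC hNB hA
  exact ⟨levelFun D b, hD.bddMeas_levelFun, hmean, fun gt hgt hgt' =>
    setOf_ne_mem_nullG hMo hPC hD.bddMeas_levelFun hgt fun A hA =>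
      (hmean A hA).symm.trans (hgt' A hA)⟩

theorem stmt12 {Ω : Type*} (mF mG : MeasurableSpace Ω) (hsub : mG ≤ mF)
    (T : (Ω → ℝ) → ℝ) (hT0 : T 0 = 0) (hMo : GMo mG T) (hQL : GQL mG T) (hPC : GPC mG T)
    (f : Ω → ℝ) (hf : BddMeas mF f) (hPS : GPS mG T f) (hNB : GNB mG T f) :
    ∃ gh : Ω → ℝ, BddMeas mG gh ∧
      (∀ A : Set Ω, MeasurableSet[mG] A → T (A.indicator f) = T (A.indicator gh)) ∧
      ∀ gt : Ω → ℝ, BddMeas mG gt →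
        (∀ A : Set Ω, MeasurableSet[mG] A → T (A.indicator f) = T (A.indicator gt)) →
        {ω | gh ω ≠ gt ω} ∈ NullG mG T :=
  stmt12_general mG T hMo hQL hPC f hPS hNB
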